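/- Every pack-good congruence on (ℕ⁺)* is a park-good congruence: if a monoid congruence ≡ is a pack-congruence and is compatible with restriction to alphabet intervals, then ≡ is also a park-congruence (and remains compatible with restriction to alphabet intervals). -/

import Mathlib

open scoped Classical

/-- Words over the positive integers. -/
abbrev Word : Type := List ℕ+

/-- Evaluation of a word: number of occurrences of each letter. -/
def ev (w : Word) : ℕ+ → ℕ := fun a => w.count a

/-- A monoid congruence on the free monoid `(ℕ⁺)*`. -/
def IsCongruence (r : Word → Word → Prop) : Prop :=
  Equivalence r ∧ ∀ u v u' v', r u v → r u' v' → r (u ++ u') (v ++ v')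

/-- Restriction of a word to the letters belonging to a set `I`. -/
noncomputable def restrictTo (I : Set ℕ+) (w : Word) : Word :=
  w.filter fun a => decide (a ∈ I)

/-- `I` is an interval (order-convex subset) of `ℕ⁺`. -/
def IsIntervalSet (I : Set ℕ+) : Prop :=
  ∀ ⦃a b c : ℕ+⦄, a ∈ I → c ∈ I → a ≤ b → b ≤ c → b ∈ I

/-- Compatibility with restriction to alphabet intervals. -/
def CompatRestrict (r : Word → Word → Prop) : Prop :=
  ∀ I : Set ℕ+, IsIntervalSet I → ∀ u v, r u v → r (restrictTo I u) (restrictTo I v)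

/-- `r` is a `φ`-congruence. -/
def IsPhiCongruence (φ : Word → Word) (r : Word → Word → Prop) : Prop :=
  ∀ u v, r u v ↔ (r (φ u) (φ v) ∧ ev u = ev v)

/-- Standardization. -/
def std (w : Word) : Word :=
  (List.range w.length).map fun i =>
    ⟨((List.range w.length).countP fun j =>
        decide (w.getD j 1 < w.getD i 1 ∨ (w.getD j 1 = w.getD i 1 ∧ j < i))) + 1,
      Nat.succ_pos _⟩

/-- Packing. -/
def pack (w : Word) : Word :=
  w.map fun a => ⟨(w.dedup.countP fun b => decide (b < a)) + 1, Nat.succ_pos _⟩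

theorem parkBad_ex (w : Word) :
    ∃ d : ℕ, 1 ≤ d ∧ (w.countP fun a : ℕ+ => decide ((a : ℕ) ≤ d)) < d :=
  ⟨w.length + 1, Nat.succ_le_succ (Nat.zero_le _), by
    have h : (w.countP fun a : ℕ+ => decide ((a : ℕ) ≤ w.length + 1)) ≤ w.length :=
      List.countP_le_length
    omega⟩

/-- The smallest `d ≥ 1` such that fewer than `d` letters of `w` are `≤ d`. -/
noncomputable def parkBad (w : Word) : ℕ := Nat.find (parkBad_ex w)

/-- One pass of the parkization procedure, with fuel. -/
noncomputable def parkAux : ℕ → Word → Word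
  | 0, w => w
  | f + 1, w =>
    if parkBad w ≤ w.length then
      parkAux f (w.map fun a : ℕ+ => if parkBad w < (a : ℕ) then (a - 1 : ℕ+) else a)
    else w

/-- Parkization. The fuel `(sum of the letters)` always suffices,
since every pass strictly decreases the sum of the letters. -/
noncomputable def park (w : Word) : Word := parkAux (w.map fun a => (a : ℕ)).sum w

/-- Smallest monoid congruence containing `base`. -/
def CongClosure (base : Word → Word → Prop) (u v : Word) : Prop :=
  ∀ r : Word → Word → Prop, IsCongruence r → (∀ x y, base x y → r x y) → r u v

def sylvBase (x y : Word) : Prop :=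
  ∃ (a b c : ℕ+) (v : Word), a ≤ b ∧ b < c ∧
    x = a :: c :: (v ++ [b]) ∧ y = c :: a :: (v ++ [b])

/-- The sylvester congruence. -/
def sylv : Word → Word → Prop := CongClosure sylvBase

def stalBase (x y : Word) : Prop :=
  ∃ (a b : ℕ+) (v : Word), x = b :: a :: (v ++ [b]) ∧ y = a :: b :: (v ++ [b])

/-- The stalactic congruence. -/
def stal : Word → Word → Prop := CongClosure stalBase

def sylvSharpBase (x y : Word) : Prop :=
  ∃ (a b c : ℕ+) (v : Word), a < b ∧ b ≤ c ∧
    x = b :: (v ++ [a, c]) ∧ y = b :: (v ++ [c, a])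

/-- The #-sylvester congruence. -/
def sylvSharp : Word → Word → Prop := CongClosure sylvSharpBase

/-- The taïga congruence: join of the sylvester and stalactic congruences. -/
def taiga : Word → Word → Prop := CongClosure fun u v => sylv u v ∨ stal u v

/-- Planar binary trees with letter labels. -/
inductive BT : Type where
  | leaf : BT
  | node : BT → ℕ+ → BT → BT
deriving DecidableEq

/-- Binary search tree insertion of a letter. -/
def BT.insert : BT → ℕ+ → BT
  | .leaf, l => .node .leaf l .leaf
  | .node L b R, l => if l ≤ b then .node (L.insert l) b R else .node L b (R.insert l)

/-- Binary search tree of a word: insert the letters from right to left. -/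
def bst (w : Word) : BT := w.foldr (fun l t => t.insert l) .leaf

/-- Planar binary trees labelled by a letter and a multiplicity. -/
inductive BSTM : Type where
  | leaf : BSTM
  | node : BSTM → ℕ+ → ℕ+ → BSTM → BSTM   -- left, letter, multiplicity, right
deriving DecidableEq

/-- Insertion of a letter into a binary search tree with multiplicities. -/
def BSTM.insert : BSTM → ℕ+ → BSTM
  | .leaf, l => .node .leaf l 1 .leaf
  | .node L l' k R, l =>
    if l = l' then .node L l' (k + 1) R
    else if l < l' then .node (L.insert l) l' k R
    else .node L l' k (R.insert l)

/-- The `P`-symbol: insert the letters of `w` from right to left. -/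
def Pmap (w : Word) : BSTM := w.foldr (fun l t => t.insert l) .leaf

/-- Letters of a BSTM in left-to-right (infix) order. -/
def BSTM.letters : BSTM → List ℕ+
  | .leaf => []
  | .node L l _ R => L.letters ++ l :: R.letters

/-- The binary search tree property for a BSTM. -/
def BSTM.IsSearchTree : BSTM → Prop
  | .leaf => True
  | .node L l _ R =>
      (∀ x ∈ L.letters, x < l) ∧ (∀ x ∈ R.letters, l < x) ∧
        L.IsSearchTree ∧ R.IsSearchTree

/-- Total multiplicity of a letter in a BSTM. -/
def BSTM.mult : BSTM → ℕ+ → ℕ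
  | .leaf, _ => 0
  | .node L l k R, a => L.mult a + (if a = l then (k : ℕ) else 0) + R.mult a

/-- Size of a BSTM: sum of the multiplicities. -/
def BSTM.size : BSTM → ℕ
  | .leaf => 0
  | .node L _ k R => L.size + (k : ℕ) + R.size

/-- Planar binary trees with multiplicities. -/
inductive BTM : Type where
  | leaf : BTM
  | node : BTM → ℕ+ → BTM → BTM
deriving DecidableEq

/-- Size of a BTM: sum of the multiplicities. -/
def BTM.size : BTM → ℕ
  | .leaf => 0
  | .node L k R => L.size + (k : ℕ) + R.size

/-- Number of nodes of a BTM. -/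
def BTM.numNodes : BTM → ℕ
  | .leaf => 0
  | .node L _ R => L.numNodes + 1 + R.numNodes

/-- Forgetting the letters of a BSTM gives a BTM. -/
def forgetLetters : BSTM → BTM
  | .leaf => .leaf
  | .node L _ k R => .node (forgetLetters L) k (forgetLetters R)

/-- The `B`-symbol: the BTM underlying `P(w)`. -/
def Bmap (w : Word) : BTM := forgetLetters (Pmap w)

/-- A packed word: its set of letters is `{1, …, k}` for some `k`. -/
def IsPacked (w : Word) : Prop := ∀ a ∈ w, ∀ b : ℕ+, b ≤ a → b ∈ w

/-- Number of packed words inserting to the BTM `T`. -/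
noncomputable def fT (T : BTM) : ℕ :=
  Set.ncard {w : Word | IsPacked w ∧ Bmap w = T}

/-- The hook-type product over the subtrees of a BTM. -/
def hookProd : BTM → ℕ
  | .leaf => 1
  | .node L k R =>
      (BTM.node L k R).size * ((k : ℕ) - 1).factorial * hookProd L * hookProd R

/-- Label the nodes of a BTM in infix order starting from a given letter;
returns the labelled tree and the next unused letter. -/
def infixLabelAux : BTM → ℕ+ → BSTM × ℕ+
  | .leaf, n => (.leaf, n)
  | .node L k R, n =>
    let p := infixLabelAux L n
    let q := infixLabelAux R (p.2 + 1)
    (.node p.1 p.2 k q.1, q.2)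

/-- Label the nodes of a BTM by `1, …, k` in infix order. -/
def infixLabel (T : BTM) : BSTM := (infixLabelAux T 1).1

/-!
Each pass of parkization lowers by one the letters above the first bad value `d`, and no letter
of the word equals `d` (fewer than `d` letters are `≤ d`, but at least `d - 1` are `≤ d - 1`).
So every pass is strictly monotone on the letters present and `pack ∘ park = pack`. Parkization
also commutes with permuting the word, so it preserves equality of evaluations. For words `u, v`
with `ev u = ev v` this gives `r (park u) (park v) ↔ r (pack u) (pack v)`, which turns the
pack-congruence property into the park-congruence property.
-/

theorem ev_eq_ev_iff_perm {u v : Word} : ev u = ev v ↔ u.Perm v := by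
  rw [List.perm_iff_count, funext_iff]
  rfl

theorem IsPhiCongruence.of_comp {φ ψ : Word → Word} {r : Word → Word → Prop}
    (hψ : IsPhiCongruence ψ r) (hψφ : ∀ w, ψ (φ w) = ψ w)
    (hφ : ∀ u v, ev u = ev v → ev (φ u) = ev (φ v)) :
    IsPhiCongruence φ r := by
  intro u v
  rw [hψ u v, hψ (φ u) (φ v), hψφ, hψφ]
  exact ⟨fun ⟨h, hev⟩ => ⟨⟨h, hφ u v hev⟩, hev⟩, fun ⟨⟨h, _⟩, hev⟩ => ⟨h, hev⟩⟩

theorem List.dedup_countP_lt_eq_card {α : Type*} [LinearOrder α] (l : List α) (a : α) :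
    (l.dedup.countP fun b => decide (b < a)) = (l.toFinset.filter (· < a)).card := by
  rw [List.countP_eq_length_filter, ← List.toFinset_card_of_nodup (l.nodup_dedup.filter _)]
  congr 1
  ext x
  simp

theorem pack_map_of_strictMonoOn {w : Word} {f : ℕ+ → ℕ+} (hf : StrictMonoOn f {a | a ∈ w}) :
    pack (w.map f) = pack w := by
  refine List.map_map.trans (List.map_congr_left fun a ha => PNat.eq ?_)
  show (w.map f).dedup.countP (· < f a) + 1 = w.dedup.countP (· < a) + 1
  have toFinset_map : (w.map f).toFinset = w.toFinset.image f := by ext; simp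
  rw [List.dedup_countP_lt_eq_card, List.dedup_countP_lt_eq_card, toFinset_map,
    Finset.filter_image, Finset.card_image_of_injOn]
  · rw [Finset.filter_congr fun x hx => hf.lt_iff_lt (List.mem_toFinset.mp hx) ha]
  · exact hf.injOn.mono fun x hx => List.mem_toFinset.mp (Finset.mem_filter.mp hx).1

theorem countP_coe_le_succ (w : Word) (e : ℕ) :
    w.countP (fun a : ℕ+ => (a : ℕ) ≤ e + 1) =
      w.countP (fun a : ℕ+ => (a : ℕ) ≤ e) + w.countP (fun a : ℕ+ => (a : ℕ) = e + 1) := by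
  induction w with
  | nil => rfl
  | cons a w ih =>
    simp only [List.countP_cons, ih]
    split_ifs <;> simp_all <;> omega

theorem one_le_parkBad (w : Word) : 1 ≤ parkBad w := (Nat.find_spec (parkBad_ex w)).1

theorem coe_ne_parkBad_of_mem {w : Word} {a : ℕ+} (ha : a ∈ w) : (a : ℕ) ≠ parkBad w := by
  intro had
  obtain ⟨e, he⟩ := Nat.exists_eq_add_one.mpr (one_le_parkBad w)
  have hbad : w.countP (fun a : ℕ+ => (a : ℕ) ≤ e + 1) < e + 1 :=
    he ▸ (Nat.find_spec (parkBad_ex w)).2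
  have hgood : e ≤ w.countP (fun a : ℕ+ => (a : ℕ) ≤ e) := by
    rcases Nat.eq_zero_or_pos e with rfl | he0
    · exact Nat.zero_le _
    · exact not_lt.mp fun h => Nat.find_min (parkBad_ex w) (show e < parkBad w by omega) ⟨he0, h⟩
  have hd : 0 < w.countP (fun b : ℕ+ => (b : ℕ) = e + 1) :=
    List.countP_pos_iff.mpr ⟨a, ha, by simp [had, he]⟩
  have := countP_coe_le_succ w e
  omega

theorem strictMonoOn_decrementAbove {d : ℕ} (hd : 1 ≤ d) :
    StrictMonoOn (fun a : ℕ+ => if d < (a : ℕ) then a - 1 else a) {a | (a : ℕ) ≠ d} := by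
  intro a (ha : (a : ℕ) ≠ d) b (hb : (b : ℕ) ≠ d) hab
  rw [← PNat.coe_lt_coe] at hab ⊢
  dsimp only
  have coe_pred (x : ℕ+) (hx : d < (x : ℕ)) : ((x - 1 : ℕ+) : ℕ) = x - 1 := by
    have hx1 : 1 < x := (PNat.coe_lt_coe 1 x).mp (by rw [PNat.one_coe]; omega)
    rw [PNat.sub_coe, if_pos hx1, PNat.one_coe]
  split_ifs with h₁ h₂ h₂
  · rw [coe_pred a h₁, coe_pred b h₂]; omega
  · omega
  · rw [coe_pred b h₂]; omega
  · exact hab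

theorem pack_parkAux : ∀ (n : ℕ) (w : Word), pack (parkAux n w) = pack w
  | 0, _ => rfl
  | n + 1, w => by
    rw [parkAux]
    split_ifs
    · rw [pack_parkAux n, pack_map_of_strictMonoOn <|
        (strictMonoOn_decrementAbove (one_le_parkBad w)).mono fun _ => coe_ne_parkBad_of_mem]
    · rfl

theorem pack_park (w : Word) : pack (park w) = pack w := pack_parkAux _ w

theorem List.Perm.parkBad_eq {u v : Word} (h : u.Perm v) : parkBad u = parkBad v := by
  unfold parkBad
  congr! 4
  exact h.countP_eq _

theorem List.Perm.parkAux : ∀ (n : ℕ) {u v : Word}, u.Perm v → (parkAux n u).Perm (parkAux n v)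
  | 0, _, _, h => h
  | n + 1, _, _, h => by
    rw [_root_.parkAux, _root_.parkAux, h.parkBad_eq, h.length_eq]
    split_ifs
    · exact List.Perm.parkAux n (h.map _)
    · exact h

-- The fuel in `park` elaborates through the list monad (`do let a ← w; pure ↑a`).
theorem park_eq_parkAux_sum (w : Word) : park w = parkAux (w.map (↑)).sum w := by
  unfold park
  simp only [List.map_id', List.bind_eq_flatMap, List.pure_def, ← List.map_eq_flatMap]

theorem List.Perm.park {u v : Word} (h : u.Perm v) : (park u).Perm (park v) := by
  rw [park_eq_parkAux_sum, park_eq_parkAux_sum, (h.map _).sum_eq]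
  exact List.Perm.parkAux _ h

theorem packGood_is_parkGood_general (r : Word → Word → Prop)
    (hpack : IsPhiCongruence pack r)
    (hres : CompatRestrict r) :
    IsPhiCongruence park r ∧ CompatRestrict r :=
  ⟨hpack.of_comp pack_park fun _ _ h => ev_eq_ev_iff_perm.mpr (ev_eq_ev_iff_perm.mp h).park, hres⟩

theorem packGood_is_parkGood (r : Word → Word → Prop)
    (hcong : IsCongruence r) (hpack : IsPhiCongruence pack r)
    (hres : CompatRestrict r) :
    IsPhiCongruence park r ∧ CompatRestrict r :=
  packGood_is_parkGood_general r hpack hres
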